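/- Let F₁, F₂, F₃ be fields. Then the intersection graph Γ(F₁ × F₂ × F₃) of the product ring F₁ × F₂ × F₃ is Hamiltonian; indeed, the six nontrivial ideals F₁×0×0, F₁×F₂×0, 0×F₂×0, 0×F₂×F₃, 0×0×F₃, F₁×0×F₃ form a Hamiltonian cycle in this cyclic order. -/

import Mathlib

open scoped Classical

/-- The intersection graph of a commutative ring: vertices are the nontrivial ideals,
two distinct ideals being adjacent iff their intersection is nonzero. -/
def intersectionGraph (R : Type*) [CommRing R] :
    SimpleGraph {I : Ideal R // I ≠ ⊥ ∧ I ≠ ⊤} where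
  Adj I J := I ≠ J ∧ (I : Ideal R) ⊓ (J : Ideal R) ≠ ⊥
  symm := ⟨fun I J h => ⟨h.1.symm, by rw [inf_comm]; exact h.2⟩⟩
  loopless := ⟨fun I h => h.1 rfl⟩

/-- The six nontrivial ideals of `F₁ × F₂ × F₃` in the cyclic order
`F₁×0×0, F₁×F₂×0, 0×F₂×0, 0×F₂×F₃, 0×0×F₃, F₁×0×F₃`. -/
def sixIdeals (F₁ F₂ F₃ : Type*) [Field F₁] [Field F₂] [Field F₃] :
    Fin 6 → Ideal (F₁ × F₂ × F₃) :=
  ![(⊤ : Ideal F₁).prod ((⊥ : Ideal F₂).prod (⊥ : Ideal F₃)),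
    (⊤ : Ideal F₁).prod ((⊤ : Ideal F₂).prod (⊥ : Ideal F₃)),
    (⊥ : Ideal F₁).prod ((⊤ : Ideal F₂).prod (⊥ : Ideal F₃)),
    (⊥ : Ideal F₁).prod ((⊤ : Ideal F₂).prod (⊤ : Ideal F₃)),
    (⊥ : Ideal F₁).prod ((⊥ : Ideal F₂).prod (⊤ : Ideal F₃)),
    (⊤ : Ideal F₁).prod ((⊥ : Ideal F₂).prod (⊤ : Ideal F₃))]

/-! Every ideal of a product ring is a product of ideals, and a division ring has no ideals
besides `⊥` and `⊤`; so the nontrivial ideals of `F₁ × F₂ × F₃` are the six products of `⊥`s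
and `⊤`s other than `⊥ × ⊥ × ⊥` and `⊤ × ⊤ × ⊤`. Consecutive ideals in the listed order share
a full factor, so they meet nontrivially, and the listing is a bijection from the vertices of
the 6-cycle that maps its edges to edges of `Γ`. -/

theorem Ideal.prod_inf_prod {R S : Type*} [Semiring R] [Semiring S] (I I' : Ideal R)
    (J J' : Ideal S) : I.prod J ⊓ I'.prod J' = (I ⊓ I').prod (J ⊓ J') :=
  SetLike.ext fun _ => and_and_and_comm

theorem Ideal.exists_eq_prod_prod_of_divisionSemiring {K₁ K₂ K₃ : Type*} [DivisionSemiring K₁]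
    [DivisionSemiring K₂] [DivisionSemiring K₃] (I : Ideal (K₁ × K₂ × K₃)) :
    ∃ (A : Ideal K₁) (B : Ideal K₂) (C : Ideal K₃),
      (A = ⊥ ∨ A = ⊤) ∧ (B = ⊥ ∨ B = ⊤) ∧ (C = ⊥ ∨ C = ⊤) ∧ I = A.prod (B.prod C) := by
  rw [Ideal.ideal_prod_eq I, Ideal.ideal_prod_eq (Ideal.map (RingHom.snd _ _) I)]
  exact ⟨_, _, _, Ideal.eq_bot_or_top _, Ideal.eq_bot_or_top _, Ideal.eq_bot_or_top _, rfl⟩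

namespace SimpleGraph

theorem cycleGraph.isHamiltonianCycle_cycle (n : ℕ) :
    (cycleGraph.cycle n).IsHamiltonianCycle :=
  Walk.isHamiltonianCycle_iff_isCycle_and_length_eq.mpr ⟨cycleGraph.isCycle_cycle, by simp⟩

def cycleGraph.homOfAdjSucc {V : Type*} {G : SimpleGraph V} {n : ℕ} (f : Fin (n + 2) → V)
    (hf : ∀ i, G.Adj (f i) (f (i + 1))) : cycleGraph (n + 2) →g G where
  toFun := f
  map_rel' {u v} h := by
    rcases cycleGraph_adj.mp h with h | h
    · rw [sub_eq_iff_eq_add'.mp h]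
      exact (hf v).symm
    · rw [sub_eq_iff_eq_add'.mp h]
      exact hf u

theorem exists_isHamiltonianCycle_of_bijective {V : Type*} [DecidableEq V] {G : SimpleGraph V}
    {n : ℕ} (f : Fin (n + 3) → V) (hf : Function.Bijective f)
    (hadj : ∀ i, G.Adj (f i) (f (i + 1))) :
    ∃ (a : V) (p : G.Walk a a), p.IsHamiltonianCycle :=
  ⟨_, (cycleGraph.cycle n).map (cycleGraph.homOfAdjSucc f hadj),
    (cycleGraph.isHamiltonianCycle_cycle n).map hf⟩

end SimpleGraph

section sixIdeals

variable (F₁ F₂ F₃ : Type*) [Field F₁] [Field F₂] [Field F₃]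

/- `bot_eq_zero'` and `Submodule.zero_eq_bot` make `simp` loop on `⊥ : Ideal F`; keeping
`Ideal.prod_bot_bot` and `Ideal.prod_top_top` out lets `Ideal.prod_inj` compare factorwise. -/

theorem sixIdeals_ne_bot (i : Fin 6) : sixIdeals F₁ F₂ F₃ i ≠ ⊥ := by
  fin_cases i <;> simp [sixIdeals, -bot_eq_zero']

theorem sixIdeals_ne_top (i : Fin 6) : sixIdeals F₁ F₂ F₃ i ≠ ⊤ := by
  fin_cases i <;> simp [sixIdeals, -bot_eq_zero']

theorem sixIdeals_injective : Function.Injective (sixIdeals F₁ F₂ F₃) := by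
  intro i j h
  fin_cases i <;> fin_cases j <;>
    simp_all [sixIdeals, -bot_eq_zero', -Ideal.prod_bot_bot, -Ideal.prod_top_top]

theorem exists_eq_sixIdeals (I : Ideal (F₁ × F₂ × F₃)) (hbot : I ≠ ⊥) (htop : I ≠ ⊤) :
    ∃ i, I = sixIdeals F₁ F₂ F₃ i := by
  obtain ⟨A, B, C, hA, hB, hC, rfl⟩ := I.exists_eq_prod_prod_of_divisionSemiring
  rcases hA with rfl | rfl <;> rcases hB with rfl | rfl <;> rcases hC with rfl | rfl <;>
    simp_all [Fin.exists_fin_succ, sixIdeals, -bot_eq_zero', -Ideal.prod_bot_bot,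
      -Ideal.prod_top_top]

theorem sixIdeals_inf_succ_ne_bot (i : Fin 6) :
    sixIdeals F₁ F₂ F₃ i ⊓ sixIdeals F₁ F₂ F₃ (i + 1) ≠ ⊥ := by
  fin_cases i <;> simp [sixIdeals, Ideal.prod_inf_prod, -bot_eq_zero']

end sixIdeals

/-- For fields `F₁, F₂, F₃`, the intersection graph
`Γ(F₁ × F₂ × F₃)` is Hamiltonian; indeed its six nontrivial ideals
`F₁×0×0, F₁×F₂×0, 0×F₂×0, 0×F₂×F₃, 0×0×F₃, F₁×0×F₃` form a Hamiltonian cycle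
in this cyclic order. -/
theorem intersectionGraph_three_fields_hamiltonian
    (F₁ F₂ F₃ : Type*) [Field F₁] [Field F₂] [Field F₃] :
    (∀ i, sixIdeals F₁ F₂ F₃ i ≠ ⊥ ∧ sixIdeals F₁ F₂ F₃ i ≠ ⊤) ∧
    Function.Injective (sixIdeals F₁ F₂ F₃) ∧
    (∀ I : Ideal (F₁ × F₂ × F₃), I ≠ ⊥ → I ≠ ⊤ → ∃ i, I = sixIdeals F₁ F₂ F₃ i) ∧
    (∀ i : Fin 6, sixIdeals F₁ F₂ F₃ i ⊓ sixIdeals F₁ F₂ F₃ (i + 1) ≠ ⊥) ∧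
    (∃ (a : {I : Ideal (F₁ × F₂ × F₃) // I ≠ ⊥ ∧ I ≠ ⊤})
      (p : (intersectionGraph (F₁ × F₂ × F₃)).Walk a a), p.IsHamiltonianCycle) := by
  let vertex (i : Fin 6) : {I : Ideal (F₁ × F₂ × F₃) // I ≠ ⊥ ∧ I ≠ ⊤} :=
    ⟨sixIdeals F₁ F₂ F₃ i, sixIdeals_ne_bot F₁ F₂ F₃ i, sixIdeals_ne_top F₁ F₂ F₃ i⟩
  have vertex_injective : Function.Injective vertex := fun _ _ h =>
    sixIdeals_injective F₁ F₂ F₃ (congrArg Subtype.val h)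
  have vertex_surjective : Function.Surjective vertex := fun ⟨I, hbot, htop⟩ =>
    (exists_eq_sixIdeals F₁ F₂ F₃ I hbot htop).imp fun _ h => Subtype.ext h.symm
  have adj_succ (i : Fin 6) : (intersectionGraph _).Adj (vertex i) (vertex (i + 1)) :=
    ⟨vertex_injective.ne (by simp), sixIdeals_inf_succ_ne_bot F₁ F₂ F₃ i⟩
  exact ⟨fun i => ⟨sixIdeals_ne_bot F₁ F₂ F₃ i, sixIdeals_ne_top F₁ F₂ F₃ i⟩,
    sixIdeals_injective F₁ F₂ F₃, exists_eq_sixIdeals F₁ F₂ F₃,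
    sixIdeals_inf_succ_ne_bot F₁ F₂ F₃,
    SimpleGraph.exists_isHamiltonianCycle_of_bijective vertex
      ⟨vertex_injective, vertex_surjective⟩ adj_succ⟩
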